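/- arXiv:2206.02866 — 2 statements merged into one kernel-verified Lean document; each statement's English description precedes it below -/
import Mathlib

section
/- Let R be an integral domain that is integrally closed in its fraction field K, containing a field k of characteristic 0, and let D : R → R be a k-linear derivation. Let F be a finite separable field extension of K, and extend D uniquely to a derivation D : F → F. Let C be the integral closure of R in F. Then for every element c ∈ C, the trace Tr_{F/K}(D(c)) lies in R. -/
open Module Finset in
theorem trace_deriv_aux {K F : Type*} [Field K] [Field F] [Algebra K F]
    [FiniteDimensional K F]
    (DF : F →+ F) (dK : K →+ K)
    (hleib : ∀ x y : F, DF (x * y) = DF x * y + x * DF y)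
    (hsmul : ∀ (a : K) (v : F), DF (a • v) = dK a • v + a • DF v) (x : F) :
    Algebra.trace K F (DF x) = dK (Algebra.trace K F x) := by
  classical
  let b := Module.finBasis K F
  rw [Algebra.trace_eq_matrix_trace b, Algebra.trace_eq_matrix_trace b, Matrix.trace,
    Matrix.trace]
  simp only [Matrix.diag_apply, Algebra.leftMulMatrix_eq_repr_mul]
  set M : Fin (finrank K F) → Fin (finrank K F) → K := fun i j => b.repr (x * b j) i with hM
  set N : Fin (finrank K F) → Fin (finrank K F) → K := fun i j => b.repr (DF (b j)) i with hN
  have hDb : ∀ j, DF (b j) = ∑ i, N i j • b i := by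
    intro j; rw [hN]; exact (b.sum_repr (DF (b j))).symm
  have hxb : ∀ j, x * b j = ∑ i, M i j • b i := by
    intro j; rw [hM]; exact (b.sum_repr (x * b j)).symm
  have key : ∀ j, b.repr (DF x * b j) j
      = dK (M j j) + (∑ i, M i j * N j i) - (∑ i, N i j * M j i) := by
    intro j
    have h1 : DF x * b j = DF (x * b j) - x * DF (b j) := by
      rw [hleib]; ring
    have h2 : DF (x * b j) = ∑ i, (dK (M i j) • b i + M i j • DF (b i)) := by
      conv_lhs => rw [hxb j, map_sum]
      exact Finset.sum_congr rfl fun i _ => hsmul _ _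
    have h3 : (b.repr (DF (x * b j))) j = dK (M j j) + ∑ i, M i j * N j i := by
      rw [h2, map_sum, Finset.sum_apply']
      have e : ∀ i, (b.repr (dK (M i j) • b i + M i j • DF (b i))) j
          = dK (M i j) * (if i = j then 1 else 0) + M i j * N j i := by
        intro i
        rw [map_add, map_smul, map_smul, Finsupp.add_apply, Finsupp.smul_apply,
          Finsupp.smul_apply, b.repr_self, Finsupp.single_apply, hN]
        simp [smul_eq_mul]
      rw [Finset.sum_congr rfl fun i _ => e i, Finset.sum_add_distrib]
      congr 1
      simp
    have h4 : (b.repr (x * DF (b j))) j = ∑ i, N i j * M j i := by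
      rw [hDb j, Finset.mul_sum, map_sum, Finset.sum_apply']
      refine Finset.sum_congr rfl fun i _ => ?_
      rw [mul_smul_comm, map_smul, Finsupp.smul_apply]
      simp [hM, smul_eq_mul]
    rw [h1, map_sub]
    simp only [Finsupp.coe_sub, Pi.sub_apply, h3, h4]
  calc ∑ j, b.repr (DF x * b j) j
      = ∑ j, (dK (M j j) + (∑ i, M i j * N j i) - (∑ i, N i j * M j i)) :=
        Finset.sum_congr rfl fun j _ => key j
    _ = ∑ j, dK (M j j) := by
        rw [Finset.sum_sub_distrib, Finset.sum_add_distrib]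
        have : ∑ j, ∑ i, M i j * N j i = ∑ j, ∑ i, N i j * M j i := by
          rw [Finset.sum_comm]
          exact Finset.sum_congr rfl fun j _ => Finset.sum_congr rfl fun i _ => mul_comm _ _
        rw [this]; ring
    _ = dK (∑ j, M j j) := (map_sum dK _ _).symm


/-- If `R` is an integrally closed domain containing a field `k` of characteristic `0`
with fraction field `K`, `D : R → R` is a `k`-linear derivation, `F/K` is a finite
field extension, and `DF` is the (unique) extension of `D` to a derivation of `F`,
then for every element `c` of the integral closure `C` of `R` in `F`, the trace
`Tr_{F/K}(DF c)` lies in `R`. -/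
theorem stmt0 (k R K F : Type*) [Field k] [CharZero k]
    [CommRing R] [IsDomain R] [Algebra k R] [IsIntegrallyClosed R]
    [Field K] [Algebra R K] [IsFractionRing R K] [Algebra k K] [IsScalarTower k R K]
    [Field F] [Algebra K F] [FiniteDimensional K F]
    [Algebra R F] [IsScalarTower R K F] [Algebra k F] [IsScalarTower k K F]
    (D : Derivation k R R) (DF : Derivation k F F)
    (hext : ∀ r : R, DF (algebraMap R F r) = algebraMap R F (D r)) :
    ∀ c ∈ integralClosure R F, ∃ r : R, algebraMap R K r = Algebra.trace K F (DF c) := by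
  intro c hc
  have hinj : Function.Injective (algebraMap K F) := (algebraMap K F).injective
  have htow : ∀ t : R, algebraMap R F t = algebraMap K F (algebraMap R K t) := fun t =>
    IsScalarTower.algebraMap_apply R K F t
  -- DF preserves the image of K
  have hrange : ∀ a : K, ∃ b : K, DF (algebraMap K F a) = algebraMap K F b := by
    intro a
    obtain ⟨r, s, hs, rfl⟩ := IsFractionRing.div_surjective (A := R) a
    have hsK : algebraMap R K s ≠ 0 :=
      IsFractionRing.to_map_ne_zero_of_mem_nonZeroDivisors hs
    have hsF : algebraMap R F s ≠ 0 := by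
      rw [htow]; exact fun h => hsK (hinj (by simpa using h))
    set a : K := algebraMap R K r / algebraMap R K s with ha
    have hE : algebraMap K F a * algebraMap R F s = algebraMap R F r := by
      rw [htow, htow, ← map_mul, ha, div_mul_cancel₀ _ hsK]
    have hD := congrArg DF hE
    rw [Derivation.leibniz, smul_eq_mul, smul_eq_mul, hext, hext] at hD
    clear_value a
    refine ⟨(algebraMap R K (D r) - a * algebraMap R K (D s)) / algebraMap R K s, ?_⟩
    have hval : DF (algebraMap K F a)
        = (algebraMap R F (D r) - algebraMap K F a * algebraMap R F (D s))
          / algebraMap R F s := by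
      field_simp
      linear_combination hD
    rw [hval, map_div₀, map_sub, map_mul, ← htow, ← htow, ← htow]
  choose dK hdK using hrange
  have hleib : ∀ x y : F, DF (x * y) = DF x * y + x * DF y := by
    intro x y; rw [Derivation.leibniz, smul_eq_mul, smul_eq_mul]; ring
  have hsmul : ∀ (a : K) (v : F), DF (a • v) = dK a • v + a • DF v := by
    intro a v
    rw [Algebra.smul_def, hleib, hdK, Algebra.smul_def, Algebra.smul_def]
    try ring
  let dK' : K →+ K :=
    { toFun := dK
      map_zero' := by
        apply hinj; rw [← hdK]; simp
      map_add' := fun a b => by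
        apply hinj; rw [← hdK, map_add, map_add, map_add, ← hdK, ← hdK] }
  have hmain : Algebra.trace K F (DF c) = dK (Algebra.trace K F c) :=
    trace_deriv_aux DF.toAddMonoidHom dK' hleib hsmul c
  have htr : IsIntegral R (Algebra.trace K F c) := Algebra.isIntegral_trace hc
  obtain ⟨r₀, hr₀⟩ := IsIntegrallyClosed.isIntegral_iff.mp htr
  refine ⟨D r₀, ?_⟩
  rw [hmain, ← hr₀]
  apply hinj
  rw [← hdK, ← htow, ← htow, hext]
end

section
/- Let B be a commutative ring that is absolutely integrally closed (i.e., every monic polynomial over B has a root in B). Then every prime ideal Q of B satisfies Q = Q². -/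
/-- If `B` is a commutative ring that is absolutely integrally closed (every monic
polynomial over `B` has a root in `B`), then every prime ideal `Q` of `B` satisfies
`Q = Q²`. -/
theorem stmt2 (B : Type*) [CommRing B]
    (habs : ∀ f : Polynomial B, f.Monic → ∃ x : B, f.IsRoot x)
    (Q : Ideal B) (hQ : Q.IsPrime) : Q = Q * Q := by
  refine le_antisymm (fun a ha => ?_) (Ideal.mul_le_left)
  -- consider the monic polynomial X^2 - a X - a
  obtain ⟨x, hx⟩ := habs (Polynomial.X ^ 2 + (Polynomial.C (-a) * Polynomial.X + Polynomial.C (-a)))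
    (Polynomial.monic_X_pow_add
      (Polynomial.degree_linear_le.trans_lt (by exact_mod_cast one_lt_two)))
  simp only [Polynomial.IsRoot, Polynomial.eval_add, Polynomial.eval_mul, Polynomial.eval_pow,
    Polynomial.eval_X, Polynomial.eval_C] at hx
  -- hx : x^2 + (-a * x + -a) = 0
  have key : x * (x - a) = a := by ring_nf; linear_combination hx
  have hxQ : x ∈ Q := by
    rcases hQ.mem_or_mem (key.symm ▸ ha : x * (x - a) ∈ Q) with h | h
    · exact h
    · have := Q.add_mem h ha
      simpa using this
  have : a = x * x - a * x := by linear_combination -key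
  rw [this]
  exact Ideal.sub_mem _ (Ideal.mul_mem_mul hxQ hxQ) (Ideal.mul_mem_mul ha hxQ)
end
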